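/- For agent $A^i$ with shaped reward $\tilde{r}^i = \frac{1}{2} r^i + \frac{1}{2}\max_{a^{-i}} r^{-i}$ and optimal policy $\pi^i_*$, the optimal Q-value dominates half the total Q-value: for all $a^i$ and all joint actions $\{a^i, a^{-i}\}$, $\mathcal{Q}^i_{\pi^i_*}(\bar{s}, a^i) \geq \frac{1}{2} Q^{tot}_{\bar{\pi}_*}(\bar{s}, \{a^i, a^{-i}\})$, where $Q^{tot}$ is the cumulative sum of $r^i + r^{-i}$ under the jointly optimal policy. -/
import Mathlib


/-- in a finite-horizon deterministic two-agent setting with shaped reward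
`r̃ⁱ = ½ rⁱ + ½ max_{a⁻ⁱ} r⁻ⁱ`, the Q-value of the individually optimal policy dominates
half of the jointly optimal total Q-value: for all states `s`, actions `aⁱ` and joint
actions `{aⁱ, a⁻ⁱ}`, `Qⁱ_{πⁱ*}(s, aⁱ) ≥ ½ Qᵗᵒᵗ_{π̄*}(s, {aⁱ, a⁻ⁱ})`. -/
theorem stmt4 {S Ai Ani : Type*} [Fintype Ai] [Fintype Ani] [Nonempty Ai] [Nonempty Ani]
    (T : ℕ) (γ : ℝ) (hγ : 0 < γ) (hγ1 : γ ≤ 1)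
    (P : S → Ai → Ani → S) (ri rni : S → Ai → Ani → ℝ)
    (tri : S → Ai → Ani → ℝ)
    (htri : ∀ s a b, tri s a b = (1/2 : ℝ) * ri s a b
        + (1/2 : ℝ) * Finset.univ.sup' Finset.univ_nonempty (fun b' => rni s a b'))
    (traj : (S → Ai × Ani) → S → Ai → Ani → ℕ → S × Ai × Ani)
    (htraj0 : ∀ π s a b, traj π s a b 0 = (s, a, b))
    (htrajS : ∀ π s a b n,
        traj π s a b (n+1) =
          (P (traj π s a b n).1 (traj π s a b n).2.1 (traj π s a b n).2.2,
           π (P (traj π s a b n).1 (traj π s a b n).2.1 (traj π s a b n).2.2)))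
    (Qi : (S → Ai × Ani) → S → Ai → Ani → ℝ)
    (hQi : ∀ π s a b, Qi π s a b = ∑ t ∈ Finset.range (T+1),
        γ^t * tri (traj π s a b t).1 (traj π s a b t).2.1 (traj π s a b t).2.2)
    (Qtot : (S → Ai × Ani) → S → Ai → Ani → ℝ)
    (hQtot : ∀ π s a b, Qtot π s a b = ∑ t ∈ Finset.range (T+1),
        γ^t * (ri (traj π s a b t).1 (traj π s a b t).2.1 (traj π s a b t).2.2
             + rni (traj π s a b t).1 (traj π s a b t).2.1 (traj π s a b t).2.2))
    (πi πtot : S → Ai × Ani)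
    (hπi : ∀ π s a b, Qi π s a b ≤ Qi πi s a (πi s).2)
    (hπtot : ∀ π s a b, Qtot π s a b ≤ Qtot πtot s a b) :
    ∀ s a b, (1/2 : ℝ) * Qtot πtot s a b ≤ Qi πi s a (πi s).2 := by
  intro s a b
  have h1 : (1/2 : ℝ) * Qtot πtot s a b ≤ Qi πtot s a b := by
    rw [hQtot, hQi, Finset.mul_sum]
    apply Finset.sum_le_sum
    intro t _
    rw [htri]
    have hmax : rni (traj πtot s a b t).1 (traj πtot s a b t).2.1 (traj πtot s a b t).2.2
        ≤ Finset.univ.sup' Finset.univ_nonempty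
          (fun b' => rni (traj πtot s a b t).1 (traj πtot s a b t).2.1 b') :=
      Finset.le_sup' _ (Finset.mem_univ _)
    have hγt : (0:ℝ) ≤ γ^t := le_of_lt (pow_pos hγ t)
    nlinarith [hγt, hmax]
  exact h1.trans (hπi πtot s a b)
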